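/- arXiv:2311.04312 — 3 statements merged into one kernel-verified Lean document; each statement's English description precedes it below -/
import Mathlib

section
/- Let ω : {(s,t) : 0 ≤ s ≤ t ≤ T} → [0,∞) be a control function, i.e. ω is continuous, vanishes on the diagonal, and is superadditive (ω(s,u) + ω(u,t) ≤ ω(s,t) for s ≤ u ≤ t). Then for any 0 < h ≤ T, the integral ∫₀^{T-h} ω(t, t+h) dt is at most ω(0,T) · h. -/
open MeasureTheory Set

/-!
Superadditivity gives `ω(0,t) + ω(t,t+h) ≤ ω(0,t+h)`, so the integrand is bounded by the increment
`G(t+h) - G(t)` of the nondecreasing function `G = ω(0,·)`. Integrating, the increments telescope to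
`∫_{T-h}^T G - ∫_0^h G`, which is at most `h·G(T) - h·G(0) ≤ h·ω(0,T)`.
-/

namespace MonotoneOn

variable {G : ℝ → ℝ} {a b h : ℝ}

theorem intervalIntegrable_of_mem_Icc (hG : MonotoneOn G (Icc a b)) {c d : ℝ}
    (hc : c ∈ Icc a b) (hd : d ∈ Icc a b) : IntervalIntegrable G volume c d :=
  (hG.mono (uIcc_subset_Icc hc hd)).intervalIntegrable

theorem intervalIntegrable_comp_add (hG : MonotoneOn G (Icc a b)) (hh : 0 ≤ h)
    (hab : a + h ≤ b) : IntervalIntegrable (fun t => G (t + h)) volume a (b - h) := by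
  have hG' : IntervalIntegrable G volume (a + h) b :=
    hG.intervalIntegrable_of_mem_Icc ⟨by linarith, hab⟩ ⟨hab.trans' (by linarith), le_rfl⟩
  simpa using hG'.comp_add_right h

theorem intervalIntegrable_comp_add_sub (hG : MonotoneOn G (Icc a b)) (hh : 0 ≤ h)
    (hab : a + h ≤ b) :
    IntervalIntegrable (fun t => G (t + h) - G t) volume a (b - h) :=
  (hG.intervalIntegrable_comp_add hh hab).sub
    (hG.intervalIntegrable_of_mem_Icc ⟨le_rfl, by linarith⟩ ⟨by linarith, by linarith⟩)

theorem integral_comp_add_sub_eq (hG : MonotoneOn G (Icc a b)) (hh : 0 ≤ h) (hab : a + h ≤ b) :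
    ∫ t in a..b - h, (G (t + h) - G t) = (∫ t in b - h..b, G t) - ∫ t in a..a + h, G t := by
  rw [intervalIntegral.integral_sub, intervalIntegral.integral_comp_add_right, sub_add_cancel,
    intervalIntegral.integral_interval_sub_interval_comm, intervalIntegral.integral_symm a (a + h),
    intervalIntegral.integral_symm (b - h) b]
  · ring
  all_goals first
    | exact hG.intervalIntegrable_comp_add hh hab
    | exact hG.intervalIntegrable_of_mem_Icc ⟨by linarith, by linarith⟩ ⟨by linarith, by linarith⟩

theorem integral_comp_add_sub_le (hG : MonotoneOn G (Icc a b)) (hh : 0 ≤ h) (hab : a + h ≤ b) :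
    ∫ t in a..b - h, (G (t + h) - G t) ≤ h * (G b - G a) := by
  have top : Icc (b - h) b ⊆ Icc a b := Icc_subset_Icc_left (by linarith)
  have bot : Icc a (a + h) ⊆ Icc a b := Icc_subset_Icc_right hab
  have upper : ∫ t in b - h..b, G t ≤ ∫ _ in b - h..b, G b :=
    intervalIntegral.integral_mono_on (by linarith)
      (hG.intervalIntegrable_of_mem_Icc (top (left_mem_Icc.2 (by linarith)))
        (top (right_mem_Icc.2 (by linarith))))
      intervalIntegrable_const fun t ht => hG (top ht) (top (right_mem_Icc.2 (by linarith))) ht.2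
  have lower : ∫ _ in a..a + h, G a ≤ ∫ t in a..a + h, G t :=
    intervalIntegral.integral_mono_on (by linarith) intervalIntegrable_const
      (hG.intervalIntegrable_of_mem_Icc (bot (left_mem_Icc.2 (by linarith)))
        (bot (right_mem_Icc.2 (by linarith))))
      fun t ht => hG (bot (left_mem_Icc.2 (by linarith))) (bot ht) ht.1
  simp only [intervalIntegral.integral_const, smul_eq_mul, sub_sub_cancel, add_sub_cancel_left]
    at upper lower
  rw [hG.integral_comp_add_sub_eq hh hab]
  linarith

end MonotoneOn

theorem monotoneOn_right_of_superadditive {T r : ℝ} {ω : ℝ → ℝ → ℝ}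
    (hnonneg : ∀ s t, 0 ≤ s → s ≤ t → t ≤ T → 0 ≤ ω s t)
    (hsuper : ∀ s u t, 0 ≤ s → s ≤ u → u ≤ t → t ≤ T → ω s u + ω u t ≤ ω s t) (hr : 0 ≤ r) :
    MonotoneOn (ω r) (Icc r T) := fun u hu v hv huv => by
  linarith [hsuper r u v hr hu.1 huv hv.2, hnonneg u v (hr.trans hu.1) huv hv.2]

theorem control_integral_bound_general (T h : ℝ) (ω : ℝ → ℝ → ℝ)
    (hcont : ContinuousOn (fun p : ℝ × ℝ => ω p.1 p.2)
      {p : ℝ × ℝ | 0 ≤ p.1 ∧ p.1 ≤ p.2 ∧ p.2 ≤ T})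
    (hnonneg : ∀ s t, 0 ≤ s → s ≤ t → t ≤ T → 0 ≤ ω s t)
    (hsuper : ∀ s u t, 0 ≤ s → s ≤ u → u ≤ t → t ≤ T → ω s u + ω u t ≤ ω s t)
    (hh : 0 < h) (hhT : h ≤ T) :
    ∫ t in (0:ℝ)..(T - h), ω t (t + h) ≤ ω 0 T * h := by
  have hG : MonotoneOn (ω 0) (Icc 0 T) := monotoneOn_right_of_superadditive hnonneg hsuper le_rfl
  have hf : ContinuousOn (fun t => ω t (t + h)) (Icc 0 (T - h)) :=
    hcont.comp (f := fun t => (t, t + h)) (by fun_prop) fun t ht =>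
      ⟨ht.1, by linarith [ht.1], by linarith [ht.2]⟩
  have increment : ∀ t ∈ Icc 0 (T - h), ω t (t + h) ≤ ω 0 (t + h) - ω 0 t := fun t ht => by
    linarith [hsuper 0 t (t + h) le_rfl ht.1 (by linarith) (by linarith [ht.2])]
  calc ∫ t in (0:ℝ)..(T - h), ω t (t + h)
      ≤ ∫ t in (0:ℝ)..(T - h), (ω 0 (t + h) - ω 0 t) :=
        intervalIntegral.integral_mono_on (by linarith) (hf.intervalIntegrable_of_Icc (by linarith))
          (hG.intervalIntegrable_comp_add_sub hh.le (by linarith)) increment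
    _ ≤ h * (ω 0 T - ω 0 0) := hG.integral_comp_add_sub_le hh.le (by linarith)
    _ ≤ ω 0 T * h := by nlinarith [hnonneg 0 0 le_rfl le_rfl (by linarith)]

/-- For a control function `ω` on `[0,T]` (continuous on the simplex,
vanishing on the diagonal, nonnegative and superadditive), and `0 < h ≤ T`,
the integral `∫₀^{T-h} ω(t, t+h) dt` is at most `ω(0,T) · h`. -/
theorem control_integral_bound (T h : ℝ) (ω : ℝ → ℝ → ℝ)
    (hcont : ContinuousOn (fun p : ℝ × ℝ => ω p.1 p.2)
      {p : ℝ × ℝ | 0 ≤ p.1 ∧ p.1 ≤ p.2 ∧ p.2 ≤ T})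
    (hdiag : ∀ t, 0 ≤ t → t ≤ T → ω t t = 0)
    (hnonneg : ∀ s t, 0 ≤ s → s ≤ t → t ≤ T → 0 ≤ ω s t)
    (hsuper : ∀ s u t, 0 ≤ s → s ≤ u → u ≤ t → t ≤ T → ω s u + ω u t ≤ ω s t)
    (hh : 0 < h) (hhT : h ≤ T) :
    ∫ t in (0:ℝ)..(T - h), ω t (t + h) ≤ ω 0 T * h :=
  control_integral_bound_general T h ω hcont hnonneg hsuper hh hhT
end

section
/- Let 1 ≤ q ≤ p < ∞ and θ = q/p ∈ (0,1]. For any function f : [s,t] → ℝ^d of finite q-variation, the p-variation of f satisfies the interpolation bound ‖f‖_{p-var;[s,t]} ≤ ‖f‖_{q-var;[s,t]}^θ · (2 sup_{u∈[s,t]} |f(u) - f(s)|)^{1-θ}. -/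
open scoped ENNReal

/-- The `p`-variation of `f` on `[s,t]`: supremum over all finite partitions
`s = u 0 ≤ u 1 ≤ ... ≤ u n = t` of `(∑ |f(u_{i+1}) - f(u_i)|^p)^{1/p}`. -/
noncomputable def pVar {E : Type*} [NormedAddCommGroup E] (p : ℝ) (f : ℝ → E)
    (s t : ℝ) : ℝ≥0∞ :=
  ⨆ (n : ℕ) (u : {u : Fin (n + 1) → ℝ // Monotone u ∧ u 0 = s ∧ u (Fin.last n) = t}),
    (∑ i : Fin n, ((‖f (u.1 i.succ) - f (u.1 i.castSucc)‖₊ : ℝ≥0∞)) ^ p) ^ (1 / p)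

/-!
Each increment `|f(u_{i+1}) - f(u_i)|` of a partition is at most `2 sup_u |f(u) - f(s)|`, so
`|Δf|^p ≤ |Δf|^q · (2 sup |f - f(s)|)^{p-q}`. Summing over the partition bounds the sum of
`p`-th powers by the `q`-th power of the `q`-variation times `(2 sup |f - f(s)|)^{p-q}`, and
taking `p`-th roots gives the interpolation inequality.
-/

namespace ENNReal

theorem rpow_le_rpow_mul_rpow_sub {a M : ℝ≥0∞} {p q : ℝ} (hq : 0 ≤ q) (hqp : q ≤ p)
    (haM : a ≤ M) : a ^ p ≤ a ^ q * M ^ (p - q) :=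
  calc a ^ p = a ^ q * a ^ (p - q) := by
        rw [← rpow_add_of_nonneg _ _ hq (sub_nonneg.2 hqp), add_sub_cancel]
    _ ≤ a ^ q * M ^ (p - q) := by gcongr

theorem rpow_mul_rpow_sub_rpow_inv (V M : ℝ≥0∞) {p q : ℝ} (hp : 0 < p) :
    (V ^ q * M ^ (p - q)) ^ (1 / p) = V ^ (q / p) * M ^ (1 - q / p) := by
  rw [mul_rpow_of_nonneg _ _ (by positivity), ← rpow_mul, ← rpow_mul,
    show q * (1 / p) = q / p by ring, show (p - q) * (1 / p) = 1 - q / p by field_simp]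

end ENNReal

section Partition

variable {E : Type*} [NormedAddCommGroup E] {s t : ℝ} {n : ℕ}
  (u : {u : Fin (n + 1) → ℝ // Monotone u ∧ u 0 = s ∧ u (Fin.last n) = t})

theorem partition_mem_Icc (j : Fin (n + 1)) : u.1 j ∈ Set.Icc s t :=
  ⟨u.2.2.1.symm.le.trans (u.2.1 (Fin.zero_le j)), (u.2.1 (Fin.le_last j)).trans u.2.2.2.le⟩

theorem partition_sum_rpow_one_div_le_pVar (p : ℝ) (f : ℝ → E) :
    (∑ i : Fin n, ((‖f (u.1 i.succ) - f (u.1 i.castSucc)‖₊ : ℝ≥0∞)) ^ p) ^ (1 / p) ≤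
      pVar p f s t :=
  le_iSup₂ (f := fun n (u : {u : Fin (n + 1) → ℝ // Monotone u ∧ u 0 = s ∧ u (Fin.last n) = t}) =>
    (∑ i : Fin n, ((‖f (u.1 i.succ) - f (u.1 i.castSucc)‖₊ : ℝ≥0∞)) ^ p) ^ (1 / p)) n u

theorem partition_sum_rpow_le_pVar_rpow {q : ℝ} (hq : 0 < q) (f : ℝ → E) :
    ∑ i : Fin n, ((‖f (u.1 i.succ) - f (u.1 i.castSucc)‖₊ : ℝ≥0∞)) ^ q ≤ pVar q f s t ^ q := by
  calc ∑ i : Fin n, ((‖f (u.1 i.succ) - f (u.1 i.castSucc)‖₊ : ℝ≥0∞)) ^ q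
      = ((∑ i : Fin n, ((‖f (u.1 i.succ) - f (u.1 i.castSucc)‖₊ : ℝ≥0∞)) ^ q) ^ (1 / q)) ^ q := by
        rw [← ENNReal.rpow_mul, one_div_mul_cancel hq.ne', ENNReal.rpow_one]
    _ ≤ pVar q f s t ^ q := by gcongr; exact partition_sum_rpow_one_div_le_pVar u q f

end Partition

theorem nnnorm_sub_le_two_mul_iSup_nnnorm_sub {E : Type*} [NormedAddCommGroup E]
    (f : ℝ → E) {s t x y : ℝ} (hx : x ∈ Set.Icc s t) (hy : y ∈ Set.Icc s t) :
    (‖f y - f x‖₊ : ℝ≥0∞) ≤ 2 * ⨆ u ∈ Set.Icc s t, (‖f u - f s‖₊ : ℝ≥0∞) := by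
  have hle : ∀ v ∈ Set.Icc s t, edist (f v) (f s) ≤ ⨆ u ∈ Set.Icc s t, (‖f u - f s‖₊ : ℝ≥0∞) :=
    fun v hv => (edist_eq_enorm_sub _ _).trans_le <|
      le_iSup₂ (f := fun u (_ : u ∈ Set.Icc s t) => (‖f u - f s‖₊ : ℝ≥0∞)) v hv
  calc (‖f y - f x‖₊ : ℝ≥0∞) = edist (f y) (f x) := (edist_eq_enorm_sub _ _).symm
    _ ≤ edist (f y) (f s) + edist (f x) (f s) := edist_triangle_right _ _ _
    _ ≤ _ := by rw [two_mul]; exact add_le_add (hle y hy) (hle x hx)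

theorem pVar_le_pVar_rpow_mul_two_iSup_rpow {E : Type*} [NormedAddCommGroup E] {p q : ℝ}
    (hq : 0 < q) (hqp : q ≤ p) (f : ℝ → E) (s t : ℝ) :
    pVar p f s t ≤ pVar q f s t ^ (q / p) *
      (2 * ⨆ u ∈ Set.Icc s t, (‖f u - f s‖₊ : ℝ≥0∞)) ^ (1 - q / p) := by
  have hp : 0 < p := hq.trans_le hqp
  set M := 2 * ⨆ u ∈ Set.Icc s t, (‖f u - f s‖₊ : ℝ≥0∞)
  refine iSup₂_le fun n u => ?_
  have hsum : ∑ i : Fin n, ((‖f (u.1 i.succ) - f (u.1 i.castSucc)‖₊ : ℝ≥0∞)) ^ p ≤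
      pVar q f s t ^ q * M ^ (p - q) :=
    calc _ ≤ ∑ i : Fin n, ((‖f (u.1 i.succ) - f (u.1 i.castSucc)‖₊ : ℝ≥0∞)) ^ q * M ^ (p - q) :=
          Finset.sum_le_sum fun i _ => ENNReal.rpow_le_rpow_mul_rpow_sub hq.le hqp <|
            nnnorm_sub_le_two_mul_iSup_nnnorm_sub f (partition_mem_Icc u _) (partition_mem_Icc u _)
      _ ≤ pVar q f s t ^ q * M ^ (p - q) := by
          rw [← Finset.sum_mul]; gcongr; exact partition_sum_rpow_le_pVar_rpow u hq f
  calc _ ≤ (pVar q f s t ^ q * M ^ (p - q)) ^ (1 / p) := by gcongr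
    _ = _ := ENNReal.rpow_mul_rpow_sub_rpow_inv _ _ hp

theorem variation_interpolation_general (d : ℕ) (p q : ℝ) (hq : 1 ≤ q) (hqp : q ≤ p)
    (f : ℝ → EuclideanSpace ℝ (Fin d)) (s t : ℝ) :
    pVar p f s t ≤
      (pVar q f s t) ^ (q / p) *
        ((2 : ℝ≥0∞) * ⨆ (u : ℝ) (_ : u ∈ Set.Icc s t),
          ((‖f u - f s‖₊ : ℝ≥0∞))) ^ (1 - q / p) :=
  pVar_le_pVar_rpow_mul_two_iSup_rpow (one_pos.trans_le hq) hqp f s t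

/-- Interpolation bound for variation norms: for `1 ≤ q ≤ p` and
`θ = q/p`, any `f : [s,t] → ℝ^d` of finite `q`-variation satisfies
`‖f‖_{p-var} ≤ ‖f‖_{q-var}^θ · (2 sup_{u∈[s,t]} |f(u)-f(s)|)^{1-θ}`. -/
theorem variation_interpolation (d : ℕ) (p q : ℝ) (hq : 1 ≤ q) (hqp : q ≤ p)
    (f : ℝ → EuclideanSpace ℝ (Fin d)) (s t : ℝ) (hst : s ≤ t)
    (hfin : pVar q f s t ≠ ⊤) :
    pVar p f s t ≤
      (pVar q f s t) ^ (q / p) *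
        ((2 : ℝ≥0∞) * ⨆ (u : ℝ) (_ : u ∈ Set.Icc s t),
          ((‖f u - f s‖₊ : ℝ≥0∞))) ^ (1 - q / p) :=
  variation_interpolation_general d p q hq hqp f s t
end

section
/- Let f : [0,T] → ℝ with |f(t)-f(s)| ≤ ω(s,t)^{1/p} |t-s|^{r-1/p} for a control function ω, where p ≥ 1, r ∈ (1/p, 1). Let D = {t_i} be a partition of [0,T] and f^D the piecewise-linear interpolation of f along D. Then there exists a control function ω^D with ω^D(0,T) ≤ ω(0,T) such that |f^D(t) - f^D(s)| ≤ 3^{1-1/p} ω^D(s,t)^{1/p} |t-s|^{r-1/p} for all 0 ≤ s ≤ t ≤ T. -/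
/-!
The control is `ω^D(s, t) = A t - A s`, where `A` is the piecewise-linear interpolation of
`t ↦ ω(0, t)` along the partition. It is additive, hence a control, and by superadditivity
`ω(t_i, t_j) ≤ A t_j - A t_i`. Inside one cell both `f^D` and `A` are affine, so their increments
over `[s, t]` are the fraction `λ = (t - s) / (t_{i+1} - t_i) ≤ 1` of the cell increments, and
`λ ≤ λ ^ r = λ ^ (1/p) λ ^ (r - 1/p)` transfers the Hölder bound from the cell to `[s, t]`.
For `s`, `t` in different cells, split `[s, t]` at the nearest grid points and add the three bounds
using `x^(1/p) + y^(1/p) + z^(1/p) ≤ 3^(1 - 1/p) (x + y + z)^(1/p)`.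
-/

open Finset Set

theorem sum_rpow_inv_le_card_rpow_mul {ι : Type*} (s : Finset ι) (x : ι → ℝ)
    (hx : ∀ i ∈ s, 0 ≤ x i) {p : ℝ} (hp : 1 ≤ p) :
    ∑ i ∈ s, x i ^ (1 / p) ≤ (#s : ℝ) ^ (1 - 1 / p) * (∑ i ∈ s, x i) ^ (1 / p) := by
  have hp0 : 0 < p := by linarith
  have hroot : ∀ y : ℝ, 0 ≤ y → (y ^ (1 / p)) ^ p = y := fun y hy => by
    rw [← Real.rpow_mul hy, one_div_mul_cancel hp0.ne', Real.rpow_one]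
  have hpow := Real.rpow_sum_le_const_mul_sum_rpow_of_nonneg (s := s)
    (f := fun i => x i ^ (1 / p)) hp (fun i hi => Real.rpow_nonneg (hx i hi) _)
  rw [sum_congr rfl fun i hi => hroot _ (hx i hi)] at hpow
  have hsum : 0 ≤ ∑ i ∈ s, x i ^ (1 / p) :=
    sum_nonneg fun i hi => Real.rpow_nonneg (hx i hi) _
  calc ∑ i ∈ s, x i ^ (1 / p) = ((∑ i ∈ s, x i ^ (1 / p)) ^ p) ^ (1 / p) := by
        rw [← Real.rpow_mul hsum, mul_one_div_cancel hp0.ne', Real.rpow_one]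
    _ ≤ ((#s : ℝ) ^ (p - 1) * ∑ i ∈ s, x i) ^ (1 / p) := by gcongr
    _ = (#s : ℝ) ^ (1 - 1 / p) * (∑ i ∈ s, x i) ^ (1 / p) := by
        rw [Real.mul_rpow (by positivity) (sum_nonneg hx), ← Real.rpow_mul (by positivity)]
        congr 2
        field_simp

theorem abs_sub_le_of_three_pieces {F G : ℝ → ℝ} (hG : Monotone G) {p β s a b t : ℝ}
    (hp : 1 ≤ p) (hβ : 0 ≤ β) (hsa : s ≤ a) (hab : a ≤ b) (hbt : b ≤ t)
    (hFsa : |F a - F s| ≤ (G a - G s) ^ (1 / p) * (a - s) ^ β)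
    (hFab : |F b - F a| ≤ (G b - G a) ^ (1 / p) * (b - a) ^ β)
    (hFbt : |F t - F b| ≤ (G t - G b) ^ (1 / p) * (t - b) ^ β) :
    |F t - F s| ≤ 3 ^ (1 - 1 / p) * (G t - G s) ^ (1 / p) * (t - s) ^ β := by
  have hpow := sum_rpow_inv_le_card_rpow_mul univ ![G a - G s, G b - G a, G t - G b]
    (by simp [Fin.forall_fin_succ, hG hsa, hG hab, hG hbt]) hp
  simp only [Fin.sum_univ_three, card_univ, Fintype.card_fin, Matrix.cons_val_zero,
    Matrix.cons_val_one, Matrix.cons_val_two, Matrix.head_cons, Matrix.tail_cons] at hpow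
  rw [show G a - G s + (G b - G a) + (G t - G b) = G t - G s by ring] at hpow
  have widen : ∀ {X u : ℝ}, 0 ≤ X → 0 ≤ u → u ≤ t - s →
      X ^ (1 / p) * u ^ β ≤ X ^ (1 / p) * (t - s) ^ β := fun hX hu hut =>
    mul_le_mul_of_nonneg_left (Real.rpow_le_rpow hu hut hβ) (Real.rpow_nonneg hX _)
  calc |F t - F s| ≤ |F a - F s| + |F b - F a| + |F t - F b| := by
        have := abs_add_three (F a - F s) (F b - F a) (F t - F b)
        rwa [show F a - F s + (F b - F a) + (F t - F b) = F t - F s by ring] at this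
    _ ≤ ((G a - G s) ^ (1 / p) + (G b - G a) ^ (1 / p) + (G t - G b) ^ (1 / p)) *
          (t - s) ^ β := by
        rw [add_mul, add_mul]
        gcongr ?_ + ?_ + ?_
        · exact hFsa.trans (widen (sub_nonneg.2 (hG hsa)) (by linarith) (by linarith))
        · exact hFab.trans (widen (sub_nonneg.2 (hG hab)) (by linarith) (by linarith))
        · exact hFbt.trans (widen (sub_nonneg.2 (hG hbt)) (by linarith) (by linarith))
    _ ≤ 3 ^ (1 - 1 / p) * (G t - G s) ^ (1 / p) * (t - s) ^ β :=
        mul_le_mul_of_nonneg_right (mod_cast hpow) (Real.rpow_nonneg (by linarith) _)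

theorem abs_sub_le_of_affineOn_Icc {F G : ℝ → ℝ} {a b s t u v u' v' X α β : ℝ}
    (hα : 0 ≤ α) (hβ : 0 ≤ β) (hαβ : α + β ≤ 1) (hab : a < b)
    (hF : ∀ x ∈ Icc a b, F x = u + (x - a) / (b - a) * (v - u))
    (hG : ∀ x ∈ Icc a b, G x = u' + (x - a) / (b - a) * (v' - u'))
    (hX : 0 ≤ X) (huv : |v - u| ≤ X ^ α * (b - a) ^ β) (hXG : X ≤ v' - u')
    (has : a ≤ s) (hst : s ≤ t) (htb : t ≤ b) :
    |F t - F s| ≤ (G t - G s) ^ α * (t - s) ^ β := by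
  set l := (t - s) / (b - a)
  have hl0 : 0 ≤ l := div_nonneg (by linarith) (by linarith)
  have hl1 : l ≤ l ^ (α + β) := by
    rcases hl0.eq_or_lt with hl | hl
    · rw [← hl]; positivity
    · calc l = l ^ (1 : ℝ) := (Real.rpow_one l).symm
        _ ≤ l ^ (α + β) := Real.rpow_le_rpow_of_exponent_ge hl
            ((div_le_one (by linarith)).2 (by linarith)) hαβ
  have hFst : F t - F s = l * (v - u) := by
    rw [hF t ⟨by linarith, htb⟩, hF s ⟨has, by linarith⟩]; ring
  have hGst : G t - G s = l * (v' - u') := by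
    rw [hG t ⟨by linarith, htb⟩, hG s ⟨has, by linarith⟩]; ring
  have hts : t - s = l * (b - a) := by
    simp only [l]; field_simp [(sub_pos.2 hab).ne']
  calc |F t - F s| = l * |v - u| := by rw [hFst, abs_mul, abs_of_nonneg hl0]
    _ ≤ l ^ (α + β) * (X ^ α * (b - a) ^ β) := by gcongr
    _ = (l * X) ^ α * (l * (b - a)) ^ β := by
        rw [Real.rpow_add_of_nonneg hl0 hα hβ, Real.mul_rpow hl0 hX,
          Real.mul_rpow hl0 (by linarith)]
        ring
    _ ≤ (G t - G s) ^ α * (t - s) ^ β := by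
        rw [hGst, hts]; gcongr

theorem exists_mem_Icc_of_mem_Icc (d : ℕ → ℝ) {N : ℕ} (hN : 0 < N) {x : ℝ}
    (hx : x ∈ Icc (d 0) (d N)) : ∃ n < N, x ∈ Icc (d n) (d (n + 1)) := by
  induction N, hN using Nat.le_induction with
  | base => exact ⟨0, one_pos, hx⟩
  | succ N hN ih =>
    by_cases hxN : x ≤ d N
    · obtain ⟨n, hn, hxn⟩ := ih ⟨hx.1, hxN⟩
      exact ⟨n, by omega, hxn⟩
    · exact ⟨N, by omega, (not_le.1 hxN).le, hx.2⟩

theorem abs_sub_le_of_cells {d : ℕ → ℝ} (hd : Monotone d) {N : ℕ} {F G : ℝ → ℝ}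
    (hG : Monotone G) {p β : ℝ} (hp : 1 ≤ p) (hβ : 0 ≤ β)
    (hcell : ∀ n < N, ∀ s t, d n ≤ s → s ≤ t → t ≤ d (n + 1) →
      |F t - F s| ≤ (G t - G s) ^ (1 / p) * (t - s) ^ β)
    (hgrid : ∀ m k, m ≤ k → k < N →
      |F (d k) - F (d m)| ≤ (G (d k) - G (d m)) ^ (1 / p) * (d k - d m) ^ β)
    {s t : ℝ} (hs : d 0 ≤ s) (hst : s ≤ t) (ht : t ≤ d N) :
    |F t - F s| ≤ 3 ^ (1 - 1 / p) * (G t - G s) ^ (1 / p) * (t - s) ^ β := by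
  rcases hst.eq_or_lt with rfl | hlt
  · simp only [sub_self, abs_zero]; positivity
  have hN : 0 < N := Nat.pos_of_ne_zero fun h => by subst h; linarith
  obtain ⟨n, hn, hsn⟩ := exists_mem_Icc_of_mem_Icc d hN ⟨hs, by linarith⟩
  by_cases htn : t ≤ d (n + 1)
  · calc |F t - F s| ≤ (G t - G s) ^ (1 / p) * (t - s) ^ β := hcell n hn s t hsn.1 hst htn
      _ ≤ 3 ^ (1 - 1 / p) * ((G t - G s) ^ (1 / p) * (t - s) ^ β) :=
          le_mul_of_one_le_left
            (mul_nonneg (Real.rpow_nonneg (sub_nonneg.2 (hG hst)) _)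
              (Real.rpow_nonneg (by linarith) _))
            (Real.one_le_rpow (by norm_num)
              (by rw [sub_nonneg, div_le_one (by linarith)]; exact hp))
      _ = _ := (mul_assoc _ _ _).symm
  obtain ⟨k, hk, htk⟩ := exists_mem_Icc_of_mem_Icc d hN ⟨by linarith, ht⟩
  have hnk : n + 1 ≤ k := by
    by_contra! hkn
    exact htn (htk.2.trans (hd (by omega)))
  exact abs_sub_le_of_three_pieces hG hp hβ hsn.2 (hd hnk) htk.1
    (hcell n hn s _ hsn.1 hsn.2 le_rfl) (hgrid _ _ hnk hk) (hcell k hk _ t le_rfl htk.1 htk.2)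

/-- The piecewise-linear interpolation of the values `g n` at the nodes `d n` (`n ≤ N`), written
as `g 0` plus one clamped ramp per cell, hence constant outside `[d 0, d N]`. -/
noncomputable def pwLinear (d g : ℕ → ℝ) (N : ℕ) (x : ℝ) : ℝ :=
  g 0 + ∑ n ∈ range N, (g (n + 1) - g n) * max 0 (min 1 ((x - d n) / (d (n + 1) - d n)))

namespace pwLinear

variable {d : ℕ → ℝ} (g : ℕ → ℝ) {N : ℕ}

theorem continuous : Continuous (pwLinear d g N) := by
  unfold pwLinear; fun_prop

theorem monotone (hstep : ∀ n < N, d n < d (n + 1)) (hg : ∀ n < N, g n ≤ g (n + 1)) :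
    Monotone (pwLinear d g N) := by
  intro x y hxy
  unfold pwLinear
  gcongr with n hn
  · exact sub_nonneg.2 (hg n (mem_range.1 hn))
  · exact sub_nonneg.2 (hstep n (mem_range.1 hn)).le

theorem monotone_comp {g : ℝ → ℝ} (hd : Monotone d) (hstep : ∀ n < N, d n < d (n + 1))
    (hg : MonotoneOn g (Icc (d 0) (d N))) : Monotone (pwLinear d (g ∘ d) N) :=
  pwLinear.monotone _ hstep fun n hn =>
    hg ⟨hd n.zero_le, hd hn.le⟩ ⟨hd (n + 1).zero_le, hd hn⟩ (hstep n hn).le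

theorem eq_of_mem_Icc (hd : Monotone d) (hstep : ∀ n < N, d n < d (n + 1)) {n : ℕ} (hn : n < N)
    {x : ℝ} (hx : x ∈ Icc (d n) (d (n + 1))) :
    pwLinear d g N x = g n + (x - d n) / (d (n + 1) - d n) * (g (n + 1) - g n) := by
  have hΔ : ∀ k < N, 0 < d (k + 1) - d k := fun k hk => sub_pos.2 (hstep k hk)
  have hbefore : ∀ k ∈ range n, max 0 (min 1 ((x - d k) / (d (k + 1) - d k))) = 1 := by
    intro k hk
    have hkn := mem_range.1 hk
    have : 1 ≤ (x - d k) / (d (k + 1) - d k) := by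
      rw [le_div_iff₀ (hΔ k (hkn.trans hn))]; linarith [hd (Nat.succ_le_of_lt hkn), hx.1]
    rw [min_eq_left this, max_eq_right zero_le_one]
  have hafter :
      ∀ k ∈ Finset.Ico (n + 1) N, max 0 (min 1 ((x - d k) / (d (k + 1) - d k))) = 0 := by
    intro k hk
    have hk' := Finset.mem_Ico.1 hk
    have : (x - d k) / (d (k + 1) - d k) ≤ 0 :=
      div_nonpos_of_nonpos_of_nonneg (by linarith [hd hk'.1, hx.2]) (hΔ k hk'.2).le
    exact max_eq_left ((min_le_right _ _).trans this)
  have hat : max 0 (min 1 ((x - d n) / (d (n + 1) - d n))) = (x - d n) / (d (n + 1) - d n) := by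
    have h0 := div_nonneg (sub_nonneg.2 hx.1) (hΔ n hn).le
    have h1 : (x - d n) / (d (n + 1) - d n) ≤ 1 := (div_le_one (hΔ n hn)).2 (by linarith [hx.2])
    rw [min_eq_right h1, max_eq_right h0]
  have hsum_before : ∑ k ∈ range n, (g (k + 1) - g k) *
      max 0 (min 1 ((x - d k) / (d (k + 1) - d k))) = g n - g 0 := by
    rw [sum_congr rfl fun k hk => by rw [hbefore k hk, mul_one], sum_range_sub]
  have hsum_after : ∑ k ∈ Finset.Ico (n + 1) N, (g (k + 1) - g k) *
      max 0 (min 1 ((x - d k) / (d (k + 1) - d k))) = 0 :=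
    sum_eq_zero fun k hk => by rw [hafter k hk, mul_zero]
  rw [pwLinear, ← sum_range_add_sum_Ico _ hn, sum_range_succ, hsum_before, hsum_after, hat]
  ring

theorem apply_grid (hd : Monotone d) (hstep : ∀ n < N, d n < d (n + 1)) {m : ℕ} (hm : m ≤ N) :
    pwLinear d g N (d m) = g m := by
  rcases hm.lt_or_eq with hm | rfl
  · rw [eq_of_mem_Icc g hd hstep hm ⟨le_rfl, (hstep m hm).le⟩]; simp
  · rcases Nat.eq_zero_or_pos m with rfl | hm
    · simp [pwLinear]
    · obtain ⟨k, rfl⟩ := Nat.exists_eq_succ_of_ne_zero hm.ne'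
      rw [eq_of_mem_Icc g hd hstep (n := k) (by omega) ⟨(hstep k (by omega)).le, le_rfl⟩,
        div_self (sub_pos.2 (hstep k (by omega))).ne']
      ring

end pwLinear

theorem Fin.clamp_val_eq_castSucc {N : ℕ} (i : Fin N) : Fin.clamp i N = i.castSucc :=
  Fin.ext (min_eq_left i.is_lt.le)

theorem Fin.clamp_val_add_one_eq_succ {N : ℕ} (i : Fin N) : Fin.clamp (i + 1) N = i.succ :=
  Fin.ext (min_eq_left i.is_lt)

section Control

variable {T p r : ℝ} {ω : ℝ → ℝ → ℝ}

theorem monotoneOn_zero_of_superadditive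
    (hnonneg : ∀ s t, 0 ≤ s → s ≤ t → t ≤ T → 0 ≤ ω s t)
    (hsuper : ∀ s u t, 0 ≤ s → s ≤ u → u ≤ t → t ≤ T → ω s u + ω u t ≤ ω s t) :
    MonotoneOn (ω 0) (Icc 0 T) := fun s hs t ht hst => by
  linarith [hsuper 0 s t le_rfl hs.1 hst ht.2, hnonneg s t hs.1 hst ht.2]

theorem abs_sub_le_pwLinear_control {f fD : ℝ → ℝ} {d : ℕ → ℝ} {N : ℕ}
    (hp : 1 ≤ p) (hrp : 1 / p < r) (hr1 : r < 1)
    (hnonneg : ∀ s t, 0 ≤ s → s ≤ t → t ≤ T → 0 ≤ ω s t)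
    (hsuper : ∀ s u t, 0 ≤ s → s ≤ u → u ≤ t → t ≤ T → ω s u + ω u t ≤ ω s t)
    (hf : ∀ s t, 0 ≤ s → s ≤ t → t ≤ T →
      |f t - f s| ≤ ω s t ^ (1 / p) * (t - s) ^ (r - 1 / p))
    (hd : Monotone d) (hstep : ∀ n < N, d n < d (n + 1)) (hd0 : d 0 = 0) (hdN : d N = T)
    (hfd : ∀ n < N, ∀ x ∈ Icc (d n) (d (n + 1)),
      fD x = f (d n) + (x - d n) / (d (n + 1) - d n) * (f (d (n + 1)) - f (d n)))
    {s t : ℝ} (hs : 0 ≤ s) (hst : s ≤ t) (ht : t ≤ T) :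
    |fD t - fD s| ≤ 3 ^ (1 - 1 / p) *
      (pwLinear d (ω 0 ∘ d) N t - pwLinear d (ω 0 ∘ d) N s) ^ (1 / p) *
        (t - s) ^ (r - 1 / p) := by
  have hdI (n : ℕ) (hn : n ≤ N) : 0 ≤ d n ∧ d n ≤ T :=
    ⟨hd0 ▸ hd n.zero_le, hdN ▸ hd hn⟩
  have hω (a b : ℝ) (ha : 0 ≤ a) (hab : a ≤ b) (hb : b ≤ T) :
      ω a b ≤ ω 0 b - ω 0 a := by
    linarith [hsuper 0 a b le_rfl ha hab hb]
  have hA := pwLinear.monotone_comp hd hstep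
    (by rw [hd0, hdN]; exact monotoneOn_zero_of_superadditive hnonneg hsuper)
  have hfd_grid (n : ℕ) (hn : n < N) : fD (d n) = f (d n) := by
    rw [hfd n hn _ ⟨le_rfl, (hstep n hn).le⟩, sub_self, zero_div, zero_mul, add_zero]
  refine abs_sub_le_of_cells hd hA hp (by linarith) (fun n hn s t hs hst ht => ?_)
    (fun m k hmk hk => ?_) (hd0 ▸ hs) hst (hdN ▸ ht)
  · have hnT := (hdI (n + 1) hn).2
    have hle := (hstep n hn).le
    exact abs_sub_le_of_affineOn_Icc (by positivity) (by linarith) (by linarith) (hstep n hn)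
      (hfd n hn) (fun x hx => pwLinear.eq_of_mem_Icc _ hd hstep hn hx)
      (hnonneg _ _ (hdI n hn.le).1 hle hnT) (hf _ _ (hdI n hn.le).1 hle hnT)
      (hω _ _ (hdI n hn.le).1 hle hnT) hs hst ht
  · have hm0 := (hdI m (by omega)).1
    have hkT := (hdI k hk.le).2
    rw [hfd_grid k hk, hfd_grid m (hmk.trans_lt hk), pwLinear.apply_grid _ hd hstep hk.le,
      pwLinear.apply_grid _ hd hstep (by omega), Function.comp_apply, Function.comp_apply]
    exact (hf _ _ hm0 (hd hmk) hkT).trans <| mul_le_mul_of_nonneg_right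
      (Real.rpow_le_rpow (hnonneg _ _ hm0 (hd hmk) hkT) (hω _ _ hm0 (hd hmk) hkT) (by positivity))
      (Real.rpow_nonneg (sub_nonneg.2 (hd hmk)) _)

end Control

theorem piecewise_linear_control_general (T p r : ℝ) (N : ℕ) (hp : 1 ≤ p)
    (hrp : 1 / p < r) (hr1 : r < 1)
    (ω : ℝ → ℝ → ℝ)
    (hnonneg : ∀ s t, 0 ≤ s → s ≤ t → t ≤ T → 0 ≤ ω s t)
    (hsuper : ∀ s u t, 0 ≤ s → s ≤ u → u ≤ t → t ≤ T → ω s u + ω u t ≤ ω s t)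
    (f : ℝ → ℝ)
    (hf : ∀ s t, 0 ≤ s → s ≤ t → t ≤ T →
      |f t - f s| ≤ ω s t ^ (1 / p) * (t - s) ^ (r - 1 / p))
    (D : Fin (N + 1) → ℝ) (hD : StrictMono D) (hD0 : D 0 = 0) (hDT : D (Fin.last N) = T)
    (fD : ℝ → ℝ)
    (hfD : ∀ (i : Fin N), ∀ t ∈ Set.Icc (D i.castSucc) (D i.succ),
      fD t = f (D i.castSucc) +
        (t - D i.castSucc) / (D i.succ - D i.castSucc) *
          (f (D i.succ) - f (D i.castSucc))) :
    ∃ ωD : ℝ → ℝ → ℝ,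
      ContinuousOn (fun q : ℝ × ℝ => ωD q.1 q.2)
        {q : ℝ × ℝ | 0 ≤ q.1 ∧ q.1 ≤ q.2 ∧ q.2 ≤ T} ∧
      (∀ t, 0 ≤ t → t ≤ T → ωD t t = 0) ∧
      (∀ s t, 0 ≤ s → s ≤ t → t ≤ T → 0 ≤ ωD s t) ∧
      (∀ s u t, 0 ≤ s → s ≤ u → u ≤ t → t ≤ T → ωD s u + ωD u t ≤ ωD s t) ∧
      ωD 0 T ≤ ω 0 T ∧
      (∀ s t, 0 ≤ s → s ≤ t → t ≤ T →
        |fD t - fD s| ≤ 3 ^ (1 - 1 / p) * ωD s t ^ (1 / p) * (t - s) ^ (r - 1 / p)) := by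
  set d : ℕ → ℝ := fun n => D (Fin.clamp n N)
  have hd : Monotone d := hD.monotone.comp Fin.clamp_monotone
  have hd0 : d 0 = 0 := hD0
  have hdN : d N = T := by simp only [d, Fin.clamp_eq_last N N le_rfl, hDT]
  have hstep (n : ℕ) (hn : n < N) : d n < d (n + 1) := by
    simpa only [d, Fin.clamp_val_eq_castSucc ⟨n, hn⟩, Fin.clamp_val_add_one_eq_succ ⟨n, hn⟩]
      using hD (Fin.castSucc_lt_succ (i := ⟨n, hn⟩))
  have hfd (n : ℕ) (hn : n < N) : ∀ x ∈ Icc (d n) (d (n + 1)),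
      fD x = f (d n) + (x - d n) / (d (n + 1) - d n) * (f (d (n + 1)) - f (d n)) := by
    simpa only [d, Fin.clamp_val_eq_castSucc ⟨n, hn⟩, Fin.clamp_val_add_one_eq_succ ⟨n, hn⟩]
      using hfD ⟨n, hn⟩
  set A := pwLinear d (ω 0 ∘ d) N
  have hA : Monotone A := pwLinear.monotone_comp hd hstep
    (by rw [hd0, hdN]; exact monotoneOn_zero_of_superadditive hnonneg hsuper)
  have hA0 := pwLinear.apply_grid (ω 0 ∘ d) hd hstep N.zero_le
  have hAT := pwLinear.apply_grid (ω 0 ∘ d) hd hstep le_rfl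
  simp only [Function.comp_apply, hd0, hdN] at hA0 hAT
  refine ⟨fun s t => A t - A s, ?_, fun t _ _ => sub_self _,
    fun s t _ hst _ => sub_nonneg.2 (hA hst),
    fun s u t _ _ _ _ => (sub_add_sub_cancel' _ _ _).le,
    by linarith [hnonneg 0 0 le_rfl le_rfl (hdN ▸ hd0 ▸ hd N.zero_le)],
    fun s t hs hst ht => abs_sub_le_pwLinear_control hp hrp hr1 hnonneg hsuper hf hd hstep hd0 hdN
      hfd hs hst ht⟩
  have hAc : Continuous A := pwLinear.continuous _
  exact (by fun_prop : Continuous fun q : ℝ × ℝ => A q.2 - A q.1).continuousOn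

/-- If `|f(t)-f(s)| ≤ ω(s,t)^{1/p} (t-s)^{r-1/p}` for a control `ω` on `[0,T]`,
and `f^D` is the piecewise-linear interpolation of `f` along a partition `D`, then there exists
a control `ω^D` with `ω^D(0,T) ≤ ω(0,T)` and
`|f^D(t)-f^D(s)| ≤ 3^{1-1/p} ω^D(s,t)^{1/p} (t-s)^{r-1/p}` for all `0 ≤ s ≤ t ≤ T`. -/
theorem piecewise_linear_control (T p r : ℝ) (N : ℕ) (hT : 0 < T) (hp : 1 ≤ p)
    (hrp : 1 / p < r) (hr1 : r < 1)
    (ω : ℝ → ℝ → ℝ)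
    (hcont : ContinuousOn (fun q : ℝ × ℝ => ω q.1 q.2)
      {q : ℝ × ℝ | 0 ≤ q.1 ∧ q.1 ≤ q.2 ∧ q.2 ≤ T})
    (hdiag : ∀ t, 0 ≤ t → t ≤ T → ω t t = 0)
    (hnonneg : ∀ s t, 0 ≤ s → s ≤ t → t ≤ T → 0 ≤ ω s t)
    (hsuper : ∀ s u t, 0 ≤ s → s ≤ u → u ≤ t → t ≤ T → ω s u + ω u t ≤ ω s t)
    (f : ℝ → ℝ)
    (hf : ∀ s t, 0 ≤ s → s ≤ t → t ≤ T →
      |f t - f s| ≤ ω s t ^ (1 / p) * (t - s) ^ (r - 1 / p))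
    (D : Fin (N + 1) → ℝ) (hD : StrictMono D) (hD0 : D 0 = 0) (hDT : D (Fin.last N) = T)
    (fD : ℝ → ℝ)
    (hfD : ∀ (i : Fin N), ∀ t ∈ Set.Icc (D i.castSucc) (D i.succ),
      fD t = f (D i.castSucc) +
        (t - D i.castSucc) / (D i.succ - D i.castSucc) *
          (f (D i.succ) - f (D i.castSucc))) :
    ∃ ωD : ℝ → ℝ → ℝ,
      ContinuousOn (fun q : ℝ × ℝ => ωD q.1 q.2)
        {q : ℝ × ℝ | 0 ≤ q.1 ∧ q.1 ≤ q.2 ∧ q.2 ≤ T} ∧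
      (∀ t, 0 ≤ t → t ≤ T → ωD t t = 0) ∧
      (∀ s t, 0 ≤ s → s ≤ t → t ≤ T → 0 ≤ ωD s t) ∧
      (∀ s u t, 0 ≤ s → s ≤ u → u ≤ t → t ≤ T → ωD s u + ωD u t ≤ ωD s t) ∧
      ωD 0 T ≤ ω 0 T ∧
      (∀ s t, 0 ≤ s → s ≤ t → t ≤ T →
        |fD t - fD s| ≤ 3 ^ (1 - 1 / p) * ωD s t ^ (1 / p) * (t - s) ^ (r - 1 / p)) :=
  piecewise_linear_control_general T p r N hp hrp hr1 ω hnonneg hsuper f hf D hD hD0 hDT fD hfD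
end
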